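/- arXiv:1703.02352 — 3 statements merged into one kernel-verified Lean document; each statement's English description precedes it below -/
import Mathlib

section
/- Let f : (a,b) → ℝ be continuous. Suppose for every x₀ ∈ (a,b) there exists an open interval I containing x₀ and a concave smooth (C²) function g : I → ℝ with g(x₀) = f(x₀) and g(x) ≥ f(x) for all x ∈ I. Then f is concave on (a,b). -/
open Set

lemma quad_strictConcaveOn (ε B C : ℝ) (hε : 0 < ε) :
    StrictConcaveOn ℝ (univ : Set ℝ) (fun t : ℝ => -ε * t ^ 2 + B * t + C) := by
  have h1 : ∀ t : ℝ, HasDerivAt (fun t : ℝ => -ε * t ^ 2 + B * t + C) (-ε * (2 * t) + B) t := by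
    intro t
    have : HasDerivAt (fun t : ℝ => t ^ 2) (2 * t) t := by
      simpa using hasDerivAt_pow 2 t
    simpa using (((this.const_mul (-ε)).add ((hasDerivAt_id t).const_mul B)).add_const C)
  have hd1 : deriv (fun t : ℝ => -ε * t ^ 2 + B * t + C) = fun t => -ε * (2 * t) + B :=
    funext fun t => (h1 t).deriv
  apply strictConcaveOn_of_deriv2_neg' convex_univ (by fun_prop)
  intro t _
  have h2 : HasDerivAt (fun t : ℝ => -ε * (2 * t) + B) (-ε * 2) t := by
    simpa using (((hasDerivAt_id t).const_mul (2:ℝ)).const_mul (-ε)).add_const B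
  have : deriv^[2] (fun t : ℝ => -ε * t ^ 2 + B * t + C) t = -ε * 2 := by
    rw [Function.iterate_succ, Function.iterate_one, Function.comp_apply, hd1, h2.deriv]
  rw [this]; linarith

lemma aux_concave_barrier
    (a b : ℝ) (f : ℝ → ℝ)
    (hcont : ContinuousOn f (Set.Ioo a b))
    (hbar : ∀ x₀ ∈ Set.Ioo a b, ∃ c d : ℝ, c < x₀ ∧ x₀ < d ∧
      Set.Ioo c d ⊆ Set.Ioo a b ∧ ∃ g : ℝ → ℝ,
        ContDiffOn ℝ 2 g (Set.Ioo c d) ∧ ConcaveOn ℝ (Set.Ioo c d) g ∧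
        g x₀ = f x₀ ∧ ∀ x ∈ Set.Ioo c d, f x ≤ g x)
    (x y : ℝ) (hx : x ∈ Set.Ioo a b) (hy : y ∈ Set.Ioo a b) (hxy : x < y)
    (μ ν : ℝ) (hμ : 0 < μ) (hν : 0 < ν) (hsum : μ + ν = 1) :
    μ * f x + ν * f y ≤ f (μ * x + ν * y) := by
  by_contra hlt
  push_neg at hlt
  have hyx : (0:ℝ) < y - x := by linarith
  have hne : y - x ≠ 0 := ne_of_gt hyx
  obtain ⟨s, hs⟩ : ∃ t : ℝ, t = (f y - f x) / (y - x) := ⟨_, rfl⟩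
  obtain ⟨L, hL⟩ : ∃ F : ℝ → ℝ, F = fun t => f x + s * (t - x) := ⟨_, rfl⟩
  obtain ⟨z, hz⟩ : ∃ t : ℝ, t = μ * x + ν * y := ⟨_, rfl⟩
  have hzx' : z - x = ν * (y - x) := by rw [hz]; linear_combination x * hsum
  have hzy' : y - z = μ * (y - x) := by rw [hz]; linear_combination (-y) * hsum
  have hzx : x < z := by nlinarith [mul_pos hν hyx]
  have hzy : z < y := by nlinarith [mul_pos hμ hyx]
  have hsxy : s * (y - x) = f y - f x := by rw [hs]; exact div_mul_cancel₀ _ hne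
  have hLz : L z = μ * f x + ν * f y := by
    have h0 : L z = f x + s * (z - x) := by rw [hL]
    rw [h0, hzx']
    linear_combination ν * hsxy - f x * hsum
  have hfz : f z < L z := by rw [hLz, hz]; exact hlt
  have hLx : L x = f x := by rw [hL]; simp
  have hLy : L y = f y := by
    have h0 : L y = f x + s * (y - x) := by rw [hL]
    rw [h0, hsxy]; ring
  obtain ⟨M, hM⟩ : ∃ t : ℝ, t = L z - f z := ⟨_, rfl⟩
  have hMpos : 0 < M := by rw [hM]; linarith
  have hzx0 : (0:ℝ) < z - x := by linarith
  have hzy0 : (0:ℝ) < y - z := by linarith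
  obtain ⟨ε, hε⟩ : ∃ t : ℝ, t = M / (2 * (z - x) * (y - z)) := ⟨_, rfl⟩
  have hεpos : 0 < ε := by
    rw [hε]; apply div_pos hMpos; positivity
  have hεsmall : ε * (z - x) * (y - z) = M / 2 := by
    rw [hε]; field_simp
  obtain ⟨H, hH⟩ : ∃ F : ℝ → ℝ, F = fun t => f t - L t + ε * (t - x) * (y - t) := ⟨_, rfl⟩
  have hIcc : Set.Icc x y ⊆ Set.Ioo a b := fun t ht =>
    ⟨lt_of_lt_of_le hx.1 ht.1, lt_of_le_of_lt ht.2 hy.2⟩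
  have hHcont : ContinuousOn H (Set.Icc x y) := by
    rw [hH]; simp only [hL]
    apply ContinuousOn.add
    · exact (hcont.mono hIcc).sub (by fun_prop)
    · fun_prop
  obtain ⟨x₀, hx₀mem, hmin⟩ :=
    isCompact_Icc.exists_isMinOn (nonempty_Icc.mpr hxy.le) hHcont
  have hmin' : ∀ t ∈ Set.Icc x y, H x₀ ≤ H t := fun t ht => hmin ht
  have hHz : H z < 0 := by
    have h0 : H z = f z - L z + ε * (z - x) * (y - z) := by rw [hH]
    rw [h0, hεsmall, hM]
    linarith
  have hHx₀ : H x₀ < 0 := lt_of_le_of_lt (hmin' z ⟨hzx.le, hzy.le⟩) hHz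
  have hHx : H x = 0 := by
    have h0 : H x = f x - L x + ε * (x - x) * (y - x) := by rw [hH]
    rw [h0, hLx]; ring
  have hHy : H y = 0 := by
    have h0 : H y = f y - L y + ε * (y - x) * (y - y) := by rw [hH]
    rw [h0, hLy]; ring
  have hx₀x : x₀ ≠ x := fun h => by rw [h, hHx] at hHx₀; linarith
  have hx₀y : x₀ ≠ y := fun h => by rw [h, hHy] at hHx₀; linarith
  have hx₀Ioo : x₀ ∈ Set.Ioo x y :=
    ⟨lt_of_le_of_ne hx₀mem.1 (Ne.symm hx₀x), lt_of_le_of_ne hx₀mem.2 hx₀y⟩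
  obtain ⟨c, d, hc, hd, hsub, g, hg, hgconc, hgx₀, hge⟩ :=
    hbar x₀ (hIcc ⟨hx₀mem.1, hx₀mem.2⟩)
  obtain ⟨Ψ, hΨ⟩ : ∃ F : ℝ → ℝ, F = fun t => g t + (-L t + ε * (t - x) * (y - t)) := ⟨_, rfl⟩
  have hquad : StrictConcaveOn ℝ (Set.Ioo c d)
      (fun t => -L t + ε * (t - x) * (y - t)) := by
    have heq : (fun t : ℝ => -L t + ε * (t - x) * (y - t)) =
        (fun t : ℝ => -ε * t ^ 2 + (ε * (x + y) - s) * t + (-(ε * x * y) - f x + s * x)) := by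
      funext t
      have h0 : L t = f x + s * (t - x) := by rw [hL]
      rw [h0]; ring
    rw [heq]
    exact (quad_strictConcaveOn ε _ _ hεpos).subset (subset_univ _) (convex_Ioo c d)
  have hΨconc : StrictConcaveOn ℝ (Set.Ioo c d) Ψ := by
    rw [hΨ]; exact hgconc.add_strictConcaveOn hquad
  -- choose δ
  obtain ⟨δ, hδdef⟩ : ∃ t : ℝ, t = min (min (d - x₀) (x₀ - c)) (min (y - x₀) (x₀ - x)) / 2 := ⟨_, rfl⟩
  have hδpos : 0 < δ := by
    rw [hδdef]; apply div_pos _ (by norm_num : (0:ℝ) < 2)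
    simp only [lt_min_iff]
    exact ⟨⟨by linarith, by linarith⟩, ⟨by linarith [hx₀Ioo.2], by linarith [hx₀Ioo.1]⟩⟩
  have hδ1 : δ < d - x₀ := by
    have h : min (min (d - x₀) (x₀ - c)) (min (y - x₀) (x₀ - x)) ≤ d - x₀ :=
      le_trans (min_le_left _ _) (min_le_left _ _)
    rw [hδdef]; linarith
  have hδ2 : δ < x₀ - c := by
    have h : min (min (d - x₀) (x₀ - c)) (min (y - x₀) (x₀ - x)) ≤ x₀ - c :=
      le_trans (min_le_left _ _) (min_le_right _ _)
    rw [hδdef]; linarith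
  have hδ3 : δ < y - x₀ := by
    have h : min (min (d - x₀) (x₀ - c)) (min (y - x₀) (x₀ - x)) ≤ y - x₀ :=
      le_trans (min_le_right _ _) (min_le_left _ _)
    rw [hδdef]; linarith
  have hδ4 : δ < x₀ - x := by
    have h : min (min (d - x₀) (x₀ - c)) (min (y - x₀) (x₀ - x)) ≤ x₀ - x :=
      le_trans (min_le_right _ _) (min_le_right _ _)
    rw [hδdef]; linarith
  obtain ⟨u, hu⟩ : ∃ t : ℝ, t = x₀ - δ := ⟨_, rfl⟩
  obtain ⟨v, hv⟩ : ∃ t : ℝ, t = x₀ + δ := ⟨_, rfl⟩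
  have huIoo : u ∈ Set.Ioo c d := ⟨by rw [hu]; linarith, by rw [hu]; linarith⟩
  have hvIoo : v ∈ Set.Ioo c d := ⟨by rw [hv]; linarith, by rw [hv]; linarith⟩
  have huIcc : u ∈ Set.Icc x y := ⟨by rw [hu]; linarith, by rw [hu]; linarith [hx₀Ioo.2]⟩
  have hvIcc : v ∈ Set.Icc x y := ⟨by rw [hv]; linarith [hx₀Ioo.1], by rw [hv]; linarith⟩
  have huv : u ≠ v := by rw [hu, hv]; intro h; linarith [hδpos]
  have hΨeq : Ψ x₀ = H x₀ := by
    have h0 : Ψ x₀ = g x₀ + (-L x₀ + ε * (x₀ - x) * (y - x₀)) := by rw [hΨ]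
    have h1 : H x₀ = f x₀ - L x₀ + ε * (x₀ - x) * (y - x₀) := by rw [hH]
    rw [h0, h1, hgx₀]; ring
  have hΨu : Ψ x₀ ≤ Ψ u := by
    have h1 : H u ≤ Ψ u := by
      have hgu := hge u huIoo
      have h0 : Ψ u = g u + (-L u + ε * (u - x) * (y - u)) := by rw [hΨ]
      have h2 : H u = f u - L u + ε * (u - x) * (y - u) := by rw [hH]
      rw [h0, h2]; linarith
    have h3 := hmin' u huIcc
    linarith [hΨeq]
  have hΨv : Ψ x₀ ≤ Ψ v := by
    have h1 : H v ≤ Ψ v := by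
      have hgv := hge v hvIoo
      have h0 : Ψ v = g v + (-L v + ε * (v - x) * (y - v)) := by rw [hΨ]
      have h2 : H v = f v - L v + ε * (v - x) * (y - v) := by rw [hH]
      rw [h0, h2]; linarith
    have h3 := hmin' v hvIcc
    linarith [hΨeq]
  have hmid : (1/2 : ℝ) • u + (1/2 : ℝ) • v = x₀ := by
    rw [hu, hv]; simp only [smul_eq_mul]; ring
  have hfinal := hΨconc.2 huIoo hvIoo huv (by norm_num : (0:ℝ) < 1/2)
    (by norm_num : (0:ℝ) < 1/2) (by norm_num)
  rw [hmid] at hfinal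
  simp only [smul_eq_mul] at hfinal
  linarith

/-- A continuous function on `(a,b)` admitting, at each point, a local
smooth (C²) concave upper barrier touching it at that point, is concave on `(a,b)`. -/
theorem concave_of_smooth_concave_barriers
    (a b : ℝ) (hab : a < b) (f : ℝ → ℝ)
    (hcont : ContinuousOn f (Set.Ioo a b))
    (hbar : ∀ x₀ ∈ Set.Ioo a b, ∃ c d : ℝ, c < x₀ ∧ x₀ < d ∧
      Set.Ioo c d ⊆ Set.Ioo a b ∧ ∃ g : ℝ → ℝ,
        ContDiffOn ℝ 2 g (Set.Ioo c d) ∧ ConcaveOn ℝ (Set.Ioo c d) g ∧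
        g x₀ = f x₀ ∧ ∀ x ∈ Set.Ioo c d, f x ≤ g x) :
    ConcaveOn ℝ (Set.Ioo a b) f := by
  refine ⟨convex_Ioo a b, ?_⟩
  intro x hx y hy μ ν hμ hν hsum
  simp only [smul_eq_mul]
  rcases eq_or_lt_of_le hμ with hμ0 | hμpos
  · have hν1 : ν = 1 := by linarith
    rw [← hμ0, hν1]; simp
  rcases eq_or_lt_of_le hν with hν0 | hνpos
  · have hμ1 : μ = 1 := by linarith
    rw [← hν0, hμ1]; simp
  rcases lt_trichotomy x y with hxy | hxy | hxy
  · exact aux_concave_barrier a b f hcont hbar x y hx hy hxy μ ν hμpos hνpos hsum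
  · rw [hxy]
    have h1 : μ * y + ν * y = y := by linear_combination y * hsum
    rw [h1]
    exact le_of_eq (by linear_combination (f y) * hsum)
  · have := aux_concave_barrier a b f hcont hbar y x hy hx hxy ν μ hνpos hμpos (by linarith)
    have heq : ν * y + μ * x = μ * x + ν * y := by ring
    rw [heq] at this
    linarith
end

section
/- Let I : (0,∞) → (0,∞) be the isoperimetric profile of a Riemannian 3-manifold in which: (i) for every V > 0 an isoperimetric region Ω_V with smooth boundary of constant mean curvature exists, and (ii) for every V₀ the one-parameter family obtained by flowing ∂Ω_{V₀} at unit normal speed provides a smooth comparison function I_{V₀} with I_{V₀} ≥ I, I_{V₀}(V₀) = I(V₀), and I_{V₀}''(V) I_{V₀}(V)² ≤ −∫_{Σ(V)} (Ric(n,n) + |A|²). If in addition Ric ≥ 0, then I is concave. -/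
/-!
Call `J` a concave upper barrier for `f` at `x` if `J` is concave near `x`, `J ≥ f` there and
`J x = f x`. A continuous function with such a barrier at every point satisfies the minimum
principle of concave functions on every segment: perturbing by a small `-δ u²`, an interior
minimum of `f - δ u²` would be a local minimum of the strictly concave `J - δ u²`, which is
impossible. Applied to `f` minus a linear function, this puts `f` above its chords, i.e. `f` is
concave. The comparison functions `J` of the isoperimetric profile are such barriers, since
`J'' J² ≤ -Φ ≤ 0` and `J ≥ I > 0` force `J'' ≤ 0`.
-/

open Set Filter Topology

def HasConcaveUpperBarrierAt (f : ℝ → ℝ) (x : ℝ) : Prop :=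
  ∃ U ∈ 𝓝 x, ∃ J : ℝ → ℝ, ConcaveOn ℝ U J ∧ J x = f x ∧ ∀ y ∈ U, f y ≤ J y

theorem HasConcaveUpperBarrierAt.add_concaveOn {f h : ℝ → ℝ} {x : ℝ}
    (hf : HasConcaveUpperBarrierAt f x) (hh : ConcaveOn ℝ univ h) :
    HasConcaveUpperBarrierAt (f + h) x := by
  obtain ⟨U, hU, J, hJ, hJx, hfJ⟩ := hf
  refine ⟨U, hU, J + h, hJ.add (hh.subset (subset_univ U) hJ.1), by simp [hJx], fun y hy => ?_⟩
  simpa using hfJ y hy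

theorem StrictConcaveOn.not_isLocalMin {f : ℝ → ℝ} {U : Set ℝ} {x : ℝ}
    (hf : StrictConcaveOn ℝ U f) (hU : U ∈ 𝓝 x) : ¬IsLocalMin f x := by
  intro hmin
  obtain ⟨ε, hε, hball⟩ := Metric.eventually_nhds_iff.1 (Filter.Eventually.and hU hmin)
  have hnear : ∀ y, |y - x| < ε → y ∈ U ∧ f x ≤ f y := fun y hy => hball (by rwa [Real.dist_eq])
  obtain ⟨hlU, hl⟩ := hnear (x - ε / 2) (by rw [abs_lt]; constructor <;> linarith)
  obtain ⟨hrU, hr⟩ := hnear (x + ε / 2) (by rw [abs_lt]; constructor <;> linarith)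
  have hmid := hf.2 hlU hrU (by linarith) (by norm_num : (0 : ℝ) < 1 / 2)
    (by norm_num : (0 : ℝ) < 1 / 2) (by norm_num)
  rw [show (1 / 2 : ℝ) • (x - ε / 2) + (1 / 2 : ℝ) • (x + ε / 2) = x by
    simp only [smul_eq_mul]; ring] at hmid
  simp only [smul_eq_mul] at hmid
  linarith

theorem min_le_of_hasConcaveUpperBarrierAt {g : ℝ → ℝ} {a b z : ℝ}
    (hg : ContinuousOn g (Icc a b)) (hbar : ∀ x ∈ Ioo a b, HasConcaveUpperBarrierAt g x)
    (hz : z ∈ Icc a b) : min (g a) (g b) ≤ g z := by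
  by_contra! hlt
  obtain ⟨δ, hδ, hδsmall⟩ := exists_pos_mul_lt (sub_pos.2 hlt) (a ^ 2 + b ^ 2)
  set gδ : ℝ → ℝ := fun u => g u - δ * u ^ 2
  obtain ⟨x₀, hx₀, hx₀min⟩ : ∃ x₀ ∈ Icc a b, IsMinOn gδ (Icc a b) x₀ :=
    isCompact_Icc.exists_isMinOn ⟨z, hz⟩ (hg.sub (by fun_prop))
  have hbelow : gδ x₀ < min (g a) (g b) - (a ^ 2 + b ^ 2) * δ := by
    have : gδ x₀ ≤ gδ z := hx₀min hz
    simp only [gδ] at this ⊢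
    linarith [mul_nonneg hδ.le (sq_nonneg z)]
  have hx₀a : gδ x₀ < gδ a := by
    simp only [gδ] at hbelow ⊢
    linarith [min_le_left (g a) (g b), mul_nonneg hδ.le (sq_nonneg b)]
  have hx₀b : gδ x₀ < gδ b := by
    simp only [gδ] at hbelow ⊢
    linarith [min_le_right (g a) (g b), mul_nonneg hδ.le (sq_nonneg a)]
  have hx₀' : x₀ ∈ Ioo a b :=
    ⟨hx₀.1.lt_of_ne (by rintro rfl; exact lt_irrefl _ hx₀a),
      hx₀.2.lt_of_ne (by rintro rfl; exact lt_irrefl _ hx₀b)⟩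
  obtain ⟨U, hU, J, hJ, hJx, hgJ⟩ := hbar x₀ hx₀'
  have hsq : StrictConvexOn ℝ univ fun u : ℝ => δ * u ^ 2 :=
    strictConvexOn_univ_of_deriv2_pos (by fun_prop) fun u => by simpa using hδ
  refine (hJ.sub_strictConvexOn (hsq.subset (subset_univ U) hJ.1)).not_isLocalMin hU ?_
  filter_upwards [hU, Icc_mem_nhds hx₀'.1 hx₀'.2] with u huU huI
  calc J x₀ - δ * x₀ ^ 2 = gδ x₀ := by rw [hJx]
    _ ≤ gδ u := hx₀min huI
    _ ≤ J u - δ * u ^ 2 := sub_le_sub_right (hgJ u huU) _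

theorem concaveOn_of_hasConcaveUpperBarrierAt {f : ℝ → ℝ} {s : Set ℝ} (hs : Convex ℝ s)
    (hf : ContinuousOn f s) (hbar : ∀ x ∈ s, HasConcaveUpperBarrierAt f x) :
    ConcaveOn ℝ s f := by
  refine LinearOrder.concaveOn_of_lt hs fun x hx y hy hxy α β hα hβ hαβ => ?_
  have hIcc : Icc x y ⊆ s := hs.ordConnected.out hx hy
  set c := (f y - f x) / (y - x) with hc
  have hlin : ConcaveOn ℝ univ fun u => -(c * u) :=
    ⟨convex_univ, fun u _ v _ α β _ _ _ => le_of_eq (by simp only [smul_eq_mul]; ring)⟩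
  have hz : α • x + β • y ∈ Icc x y := segment_eq_Icc hxy.le ▸ ⟨α, β, hα.le, hβ.le, hαβ, rfl⟩
  have hmin := min_le_of_hasConcaveUpperBarrierAt (g := f + fun u => -(c * u))
    ((hf.mono hIcc).add (by fun_prop))
    (fun u hu => (hbar u (hIcc (Ioo_subset_Icc_self hu))).add_concaveOn hlin) hz
  have hchord : c * (y - x) = f y - f x := by rw [hc]; field_simp [(sub_pos.2 hxy).ne']
  rw [min_eq_left (by simp only [Pi.add_apply]; linarith)] at hmin
  simp only [Pi.add_apply, smul_eq_mul] at hmin ⊢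
  obtain rfl : α = 1 - β := by linarith
  linear_combination hmin - β * hchord

theorem concaveOn_of_contDiffOn_of_deriv2_nonpos {J : ℝ → ℝ} {D : Set ℝ} (hD : Convex ℝ D)
    (hD' : IsOpen D) (hJ : ContDiffOn ℝ 2 J D) (hJ'' : ∀ x ∈ D, deriv (deriv J) x ≤ 0) :
    ConcaveOn ℝ D J :=
  concaveOn_of_deriv2_nonpos' hD (hJ.differentiableOn (by norm_num))
    ((hJ.deriv_of_isOpen hD' (m := 1) (by norm_num)).differentiableOn one_ne_zero) hJ''

/-- the isoperimetric profile `I` of a 3-manifold with `Ric ≥ 0` is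
concave.  For each `V₀ > 0` the unit-normal flow of the isoperimetric boundary
`∂Ω_{V₀}` provides a smooth comparison function `J = I_{V₀}` touching `I` from above at
`V₀` and satisfying `J''(V)·J(V)² ≤ −∫_{Σ(V)}(Ric(n,n)+|A|²) =: −Φ(V)`, where `Φ ≥ 0`
since `Ric ≥ 0`. -/
theorem isoperimetric_profile_concave
    (I : ℝ → ℝ) (hIpos : ∀ V ∈ Set.Ioi (0:ℝ), 0 < I V)
    (hIcont : ContinuousOn I (Set.Ioi 0))
    (hcomp : ∀ V₀ ∈ Set.Ioi (0:ℝ), ∃ ε : ℝ, 0 < ε ∧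
      Set.Ioo (V₀ - ε) (V₀ + ε) ⊆ Set.Ioi 0 ∧ ∃ J Φ : ℝ → ℝ,
        ContDiffOn ℝ 2 J (Set.Ioo (V₀ - ε) (V₀ + ε)) ∧
        J V₀ = I V₀ ∧
        (∀ V ∈ Set.Ioo (V₀ - ε) (V₀ + ε), I V ≤ J V) ∧
        (∀ V ∈ Set.Ioo (V₀ - ε) (V₀ + ε), 0 ≤ Φ V) ∧
        (∀ V ∈ Set.Ioo (V₀ - ε) (V₀ + ε),
          deriv (deriv J) V * (J V)^2 ≤ -Φ V)) :
    ConcaveOn ℝ (Set.Ioi 0) I := by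
  refine concaveOn_of_hasConcaveUpperBarrierAt (convex_Ioi 0) hIcont fun V₀ hV₀ => ?_
  obtain ⟨ε, hε, hpos, J, Φ, hJ, hJV₀, hIJ, hΦ, hJ''Φ⟩ := hcomp V₀ hV₀
  have hJ'' : ∀ V ∈ Ioo (V₀ - ε) (V₀ + ε), deriv (deriv J) V ≤ 0 := fun V hV =>
    nonpos_of_mul_nonpos_left ((hJ''Φ V hV).trans (neg_nonpos.2 (hΦ V hV)))
      (pow_pos ((hIpos V (hpos hV)).trans_le (hIJ V hV)) 2)
  exact ⟨_, Ioo_mem_nhds (by linarith) (by linarith), J,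
    concaveOn_of_contDiffOn_of_deriv2_nonpos (convex_Ioo _ _) isOpen_Ioo hJ hJ'', hJV₀, hIJ⟩
end

section
/- Let (M,g) be an asymptotically flat 3-manifold with nonnegative scalar curvature whose isoperimetric profile I satisfies I(V) ≤ (36π)^{1/3}V^{2/3} for all V (with equality for some V₀ forcing M ≅ ℝ³), and is strictly increasing. Suppose for every volume V > 0 there exists a bounded region Ω' far out in the end with |∂Ω'| = 4πr² and |Ω'| > (4/3)πr³ for every r > 0, and suppose for each V there exist an isoperimetric region Ω and radius r ≥ 0 with |Ω| + (4/3)πr³ = V and |∂Ω| + 4πr² = I(V). Then r = 0, i.e., isoperimetric regions exist for every volume V > 0. -/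
open Set Real

/-- existence of isoperimetric regions for all volumes in an
asymptotically flat 3-manifold with nonnegative scalar curvature.  Regions are
modelled abstractly by `Ω` with volume and boundary-area functions; `I` is the
isoperimetric profile (so `I(vol ω) ≤ area ω`), satisfying Shi's inequality
`I(V) ≤ (36π)^{1/3}V^{2/3}` and strictly increasing.  For every region and every
`r > 0` a far-out region of boundary area `4πr²` and volume `> (4/3)πr³` can be
adjoined, and minimizing sequences converge to a region plus a ball at infinity of
some radius `r ≥ 0`.  Then `r = 0`: an isoperimetric region exists for every
volume `V > 0`. -/
theorem isoperimetric_regions_exist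
    {Ω : Type*} (vol area : Ω → ℝ) (I : ℝ → ℝ)
    (hvolpos : ∀ ω, 0 ≤ vol ω)
    (hub : ∀ V : ℝ, 0 < V → I V ≤ (36 * π) ^ ((1:ℝ)/3) * V ^ ((2:ℝ)/3))
    (hmono : StrictMonoOn I (Set.Ioi 0))
    (hprofile : ∀ ω : Ω, 0 < vol ω → I (vol ω) ≤ area ω)
    (hfar : ∀ ω : Ω, ∀ r : ℝ, 0 < r → ∃ ω' : Ω, ∃ v' : ℝ,
      (4/3) * π * r^3 < v' ∧ vol ω' = vol ω + v' ∧ area ω' = area ω + 4 * π * r^2)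
    (hem : ∀ V : ℝ, 0 < V → ∃ ω : Ω, ∃ r : ℝ, 0 ≤ r ∧
      vol ω + (4/3) * π * r^3 = V ∧ area ω + 4 * π * r^2 = I V) :
    ∀ V : ℝ, 0 < V → ∃ ω : Ω, vol ω = V ∧ area ω = I V := by
  intro V hV
  obtain ⟨ω, r, hr, hvol, harea⟩ := hem V hV
  rcases eq_or_lt_of_le hr with hr0 | hrpos
  · refine ⟨ω, ?_, ?_⟩ <;> simp [← hr0] at hvol harea <;> linarith
  · exfalso
    obtain ⟨ω', v', hv', hvol', harea'⟩ := hfar ω r hrpos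
    have hV' : V < vol ω' := by rw [hvol']; linarith
    have h1 : I (vol ω') ≤ area ω' := hprofile ω' (lt_trans hV hV')
    have h2 : I V < I (vol ω') := hmono (mem_Ioi.mpr hV) (mem_Ioi.mpr (lt_trans hV hV')) hV'
    have : area ω' = I V := by rw [harea']; linarith
    linarith
end
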